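/- arXiv:2302.09580 — 3 statements merged into one kernel-verified Lean document; each statement's English description precedes it below -/
import Mathlib

section
/- For σ_η > 0, τ_c > 0, ω₀ > 0, the integral (1/π)·∫₀^∞ σ_η²·τ_c² / (τ_c²·(ω² − ω₀²)² + ω²) dω equals σ_η²·τ_c / (2·ω₀²). -/
/-!
Write `c = ω₀²` and `D(x) = τ²(x² - c)² + x²`. The inversion `x ↦ c / x` of `(0, ∞)` satisfies
`D(c / x) = c² D(x) / x⁴`, so it carries `∫ x² / D` to `∫ c / D`; hence `∫ c / D` is half of
`∫ (x² + c) / D`. Since `1 + τ²(x - c / x)² = D(x) / x²`, the latter integrand is the derivative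
of `arctan (τ (x - c / x)) / τ`, which increases from `-π / (2τ)` to `π / (2τ)` on `(0, ∞)`.
-/

open MeasureTheory Set Filter Topology Real

theorem integral_Ioi_deriv_div_one_add_sq {g g' : ℝ → ℝ} {a : ℝ}
    (hderiv : ∀ x ∈ Ioi a, HasDerivAt g (g' x) x) (hg' : ∀ x ∈ Ioi a, 0 ≤ g' x)
    (hbot : Tendsto g (𝓝[>] a) atBot) (htop : Tendsto g atTop atTop) :
    IntegrableOn (fun x => g' x / (1 + g x ^ 2)) (Ioi a) ∧
      ∫ x in Ioi a, g' x / (1 + g x ^ 2) = π := by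
  set F := Function.update (arctan ∘ g) a (-(π / 2))
  have hFa : F a = -(π / 2) := Function.update_self ..
  have hF_of_ne : ∀ x ≠ a, F x = arctan (g x) := fun x hx => Function.update_of_ne hx ..
  have hcont : ContinuousWithinAt F (Ici a) a := by
    rw [← Ioi_insert, continuousWithinAt_insert_self, ContinuousWithinAt, hFa]
    exact ((tendsto_arctan_atBot.mono_right nhdsWithin_le_nhds).comp hbot).congr'
      (eventually_nhdsWithin_of_forall fun x hx => (hF_of_ne x (ne_of_gt hx)).symm)
  have hF' : ∀ x ∈ Ioi a, HasDerivAt F (g' x / (1 + g x ^ 2)) x := fun x hx => by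
    have h := (hderiv x hx).arctan
    rw [one_div_mul_eq_div] at h
    refine h.congr_of_eventuallyEq ?_
    filter_upwards [Ioi_mem_nhds hx] with y hy using hF_of_ne y (ne_of_gt hy)
  have hlim : Tendsto F atTop (𝓝 (π / 2)) :=
    ((tendsto_arctan_atTop.mono_right nhdsWithin_le_nhds).comp htop).congr'
      (eventually_gt_atTop a |>.mono fun x hx => (hF_of_ne x (ne_of_gt hx)).symm)
  have hnonneg : ∀ x ∈ Ioi a, 0 ≤ g' x / (1 + g x ^ 2) := fun x hx => by
    have := hg' x hx; positivity
  refine ⟨integrableOn_Ioi_deriv_of_nonneg hcont hF' hnonneg hlim, ?_⟩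
  rw [integral_Ioi_of_hasDerivAt_of_nonneg hcont hF' hnonneg hlim, hFa]
  ring

theorem integral_Ioi_div_sq_smul_comp_div {E : Type*} [NormedAddCommGroup E] [NormedSpace ℝ E]
    (f : ℝ → E) {c : ℝ} (hc : 0 < c) :
    ∫ x in Ioi 0, (c / x ^ 2) • f (c / x) = ∫ x in Ioi 0, f x := by
  have hderiv : ∀ x ∈ Ioi (0 : ℝ), HasDerivWithinAt (c / ·) (-(c / x ^ 2)) (Ioi 0) x :=
    fun x hx => by
      simpa [div_eq_mul_inv, mul_comm, neg_div] using
        ((hasDerivAt_inv (ne_of_gt hx)).const_mul c).hasDerivWithinAt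
  have hinv : Function.Involutive (c / · : ℝ → ℝ) := fun x => div_div_cancel₀ hc.ne'
  have himage : (c / ·) '' Ioi (0 : ℝ) = Ioi 0 := by
    rw [hinv.image_eq_preimage_symm]
    ext x
    simp [hc]
  conv_rhs => rw [← himage, integral_image_eq_integral_abs_deriv_smul measurableSet_Ioi hderiv
    hinv.injective.injOn]
  refine setIntegral_congr_fun measurableSet_Ioi fun x hx => ?_
  rw [abs_neg, abs_of_pos (div_pos hc (pow_pos hx 2))]

def ldhoDenom (τ c x : ℝ) : ℝ := τ ^ 2 * (x ^ 2 - c) ^ 2 + x ^ 2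

section

variable {τ c : ℝ}

lemma ldhoDenom_pos (hτ : τ ≠ 0) (hc : c ≠ 0) (x : ℝ) : 0 < ldhoDenom τ c x := by
  rcases eq_or_ne x 0 with rfl | hx
  · rw [ldhoDenom, zero_pow two_ne_zero, zero_sub, neg_sq, add_zero]; positivity
  · unfold ldhoDenom; positivity

lemma ldhoDenom_div (τ c : ℝ) {x : ℝ} (hx : x ≠ 0) :
    ldhoDenom τ c (c / x) = c ^ 2 / x ^ 4 * ldhoDenom τ c x := by
  unfold ldhoDenom
  field_simp
  ring

lemma continuous_ldhoDenom : Continuous (ldhoDenom τ c) := by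
  unfold ldhoDenom; fun_prop

lemma integral_Ioi_sq_div_ldhoDenom (hτ : τ ≠ 0) (hc : 0 < c) :
    ∫ x in Ioi 0, x ^ 2 / ldhoDenom τ c x = ∫ x in Ioi 0, c / ldhoDenom τ c x := by
  rw [← integral_Ioi_div_sq_smul_comp_div _ hc]
  refine setIntegral_congr_fun measurableSet_Ioi fun x hx => ?_
  have hx : x ≠ 0 := ne_of_gt hx
  have hD := (ldhoDenom_pos hτ hc.ne' x).ne'
  rw [smul_eq_mul, ldhoDenom_div τ c hx]
  field_simp

lemma integral_Ioi_add_div_ldhoDenom (hτ : 0 < τ) (hc : 0 < c) :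
    IntegrableOn (fun x => (x ^ 2 + c) / ldhoDenom τ c x) (Ioi 0) ∧
      ∫ x in Ioi 0, (x ^ 2 + c) / ldhoDenom τ c x = π / τ := by
  have hx : ∀ x ∈ Ioi (0 : ℝ), x ≠ 0 := fun x hx => ne_of_gt hx
  have hderiv : ∀ x ∈ Ioi (0 : ℝ),
      HasDerivAt (fun x => τ * (x - c / x)) (τ * (1 + c / x ^ 2)) x := fun x hx' => by
    simpa [div_eq_mul_inv, sub_eq_add_neg] using
      ((hasDerivAt_id x).sub ((hasDerivAt_inv (hx x hx')).const_mul c)).const_mul τ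
  have hbot : Tendsto (fun x => τ * (x - c / x)) (𝓝[>] 0) atBot := by
    refine Tendsto.const_mul_atBot hτ ?_
    simp_rw [sub_eq_add_neg, ← neg_div, div_eq_mul_inv]
    exact (tendsto_id.mono_left nhdsWithin_le_nhds).add_atBot
      (tendsto_inv_nhdsGT_zero.const_mul_atTop_of_neg (neg_neg_of_pos hc))
  have htop : Tendsto (fun x => τ * (x - c / x)) atTop atTop := by
    refine Tendsto.const_mul_atTop hτ ?_
    simpa only [sub_eq_add_neg, id_eq] using
      tendsto_id.atTop_add (tendsto_const_nhds.div_atTop tendsto_id).neg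
  obtain ⟨hint, hval⟩ := integral_Ioi_deriv_div_one_add_sq hderiv
    (fun x _ => by positivity) hbot htop
  have heq : ∀ x ∈ Ioi (0 : ℝ), τ * (1 + c / x ^ 2) / (1 + (τ * (x - c / x)) ^ 2) =
      τ * ((x ^ 2 + c) / ldhoDenom τ c x) := fun x hx' => by
    have hD := (ldhoDenom_pos hτ.ne' hc.ne' x).ne'
    have hx0 := hx x hx'
    unfold ldhoDenom at *
    field_simp
    ring
  rw [setIntegral_congr_fun measurableSet_Ioi heq, integral_const_mul] at hval
  refine ⟨(integrable_const_mul_iff (isUnit_iff_ne_zero.mpr hτ.ne') _).mp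
    (hint.congr_fun heq measurableSet_Ioi), ?_⟩
  rw [eq_div_iff hτ.ne', ← hval, mul_comm]

lemma integral_Ioi_div_ldhoDenom (hτ : 0 < τ) (hc : 0 < c) :
    ∫ x in Ioi 0, c / ldhoDenom τ c x = π / (2 * τ) := by
  obtain ⟨hint, hval⟩ := integral_Ioi_add_div_ldhoDenom hτ hc
  have hD := ldhoDenom_pos hτ.ne' hc.ne'
  have dominated {f : ℝ → ℝ} (hf : Continuous f) (hf0 : ∀ x, 0 ≤ f x)
      (hfle : ∀ x, f x ≤ x ^ 2 + c) : IntegrableOn (fun x => f x / ldhoDenom τ c x) (Ioi 0) := by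
    refine hint.mono' (hf.div continuous_ldhoDenom fun x => (hD x).ne').aestronglyMeasurable
      (ae_of_all _ fun x => ?_)
    rw [Real.norm_of_nonneg (div_nonneg (hf0 x) (hD x).le)]
    exact div_le_div_of_nonneg_right (hfle x) (hD x).le
  have hsq := dominated (continuous_pow 2) (fun x => sq_nonneg x) (fun x => by linarith)
  have hconst := dominated continuous_const (fun _ => hc.le) (fun x => by nlinarith)
  have hsplit : ∫ x in Ioi 0, (x ^ 2 + c) / ldhoDenom τ c x =
      2 * ∫ x in Ioi 0, c / ldhoDenom τ c x := by
    simp_rw [add_div]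
    rw [integral_add hsq hconst, integral_Ioi_sq_div_ldhoDenom hτ.ne' hc, two_mul]
  rw [hsplit, eq_div_iff hτ.ne'] at hval
  rw [eq_div_iff (by positivity)]
  linarith

end

theorem ldho_variance_general (ση τc ω0 : ℝ)
    (hτ : 0 < τc) (hω : 0 < ω0) :
    (1 / Real.pi) *
      ∫ ω in Set.Ioi (0 : ℝ),
        ση ^ 2 * τc ^ 2 / (τc ^ 2 * (ω ^ 2 - ω0 ^ 2) ^ 2 + ω ^ 2)
      = ση ^ 2 * τc / (2 * ω0 ^ 2) := by
  have hc : 0 < ω0 ^ 2 := by positivity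
  have hintegrand : (fun ω => ση ^ 2 * τc ^ 2 / (τc ^ 2 * (ω ^ 2 - ω0 ^ 2) ^ 2 + ω ^ 2)) =
      fun ω => ση ^ 2 * τc ^ 2 / ω0 ^ 2 * (ω0 ^ 2 / ldhoDenom τc (ω0 ^ 2) ω) :=
    funext fun ω => (div_mul_div_cancel₀ hc.ne' ..).symm
  rw [hintegrand, integral_const_mul, integral_Ioi_div_ldhoDenom hτ hc]
  field_simp

theorem ldho_variance (ση τc ω0 : ℝ)
    (hσ : 0 < ση) (hτ : 0 < τc) (hω : 0 < ω0) :
    (1 / Real.pi) *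
      ∫ ω in Set.Ioi (0 : ℝ),
        ση ^ 2 * τc ^ 2 / (τc ^ 2 * (ω ^ 2 - ω0 ^ 2) ^ 2 + ω ^ 2)
      = ση ^ 2 * τc / (2 * ω0 ^ 2) :=
  ldho_variance_general ση τc ω0 hτ hω
end

section
/- For any a ∈ ℂ with Re(a) > 0 and any ν ∈ ℝ with ν > −1 and r > 0, the integral ∫₀^∞ k^{ν+1}·J_ν(r k)·exp(−a k²) dk equals r^ν/(2a)^{ν+1} · exp(−r²/(4a)), where J_ν is the Bessel function of the first kind of order ν. -/
/-!
Expanding `J_ν(r k)` in its power series, the `m`-th term of the integrand is a multiple of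
`k ^ (2 s - 1) * exp (-a k²)` with `s = m + ν + 1`. The substitution `t = k²` turns its integral
into `∫ t ^ (s - 1) * exp (-a t) dt = Γ(s) / a ^ s`, which for complex `a` follows from the case of
real `a` by analytic continuation. The factor `Γ(m + ν + 1)` cancels the one in the Bessel
coefficient, so the termwise integrals are `r ^ ν / (2 a) ^ (ν + 1)` times the terms of the
exponential series of `-r² / (4 a)`. Integrating termwise is legitimate because the same computation
with absolute values, and `Re a` in place of `a`, yields a convergent series.
-/

/-- Bessel function of the first kind of real order `ν`, defined by its power series. -/
noncomputable def besselJ (ν : ℝ) (x : ℝ) : ℝ :=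
  ∑' m : ℕ, ((-1 : ℝ) ^ m / (m.factorial * Real.Gamma (m + ν + 1))) *
    (x / 2) ^ (2 * (m : ℝ) + ν)

open MeasureTheory Set Filter Complex
open scoped Topology

lemma norm_cpow_mul_exp_neg_mul {t : ℝ} (ht : 0 < t) (c a : ℂ) :
    ‖(t : ℂ) ^ c * cexp (-(a * t))‖ = t ^ c.re * Real.exp (-(a.re * t)) := by
  simp [norm_cpow_eq_rpow_re_of_pos ht, Complex.norm_exp]

lemma integrableOn_cpow_mul_exp_neg_mul_Ioi {c a : ℂ} (hc : -1 < c.re) (ha : 0 < a.re) :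
    IntegrableOn (fun t : ℝ => (t : ℂ) ^ c * cexp (-(a * t))) (Ioi 0) := by
  refine (integrableOn_rpow_mul_exp_neg_mul_rpow hc one_pos ha).mono'
    (by fun_prop : Measurable _).aestronglyMeasurable ?_
  filter_upwards [self_mem_ae_restrict measurableSet_Ioi] with t ht
  rw [norm_cpow_mul_exp_neg_mul ht, Real.rpow_one, neg_mul]

lemma differentiableOn_integral_cpow_mul_exp_neg_mul_Ioi {c : ℂ} (hc : -1 < c.re) :
    DifferentiableOn ℂ (fun a : ℂ => ∫ t in Ioi (0 : ℝ), (t : ℂ) ^ c * cexp (-(a * t)))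
      {a | 0 < a.re} := by
  intro a (ha : 0 < a.re)
  have hball : ∀ z ∈ Metric.ball a (a.re / 2), a.re / 2 < z.re := fun z hz => by
    have := (abs_re_le_norm (z - a)).trans_lt (mem_ball_iff_norm.mp hz)
    rw [sub_re, abs_lt] at this
    linarith
  -- the derivative in `a` is dominated by the integrand of exponent `c + 1` and rate `a / 2`
  refine (hasDerivAt_integral_of_dominated_loc_of_deriv_le (μ := volume.restrict (Ioi 0))
    (F := fun z t => (t : ℂ) ^ c * cexp (-(z * t)))
    (F' := fun z t => -((t : ℂ) ^ (c + 1) * cexp (-(z * t))))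
    (bound := fun t : ℝ => ‖(t : ℂ) ^ (c + 1) * cexp (-(a / 2 * t))‖)
    (Metric.ball_mem_nhds a (half_pos ha))
    (.of_forall fun z => (by fun_prop : Measurable _).aestronglyMeasurable)
    (integrableOn_cpow_mul_exp_neg_mul_Ioi hc ha)
    (by fun_prop : Measurable _).aestronglyMeasurable ?_
    (integrableOn_cpow_mul_exp_neg_mul_Ioi (by rw [add_re, one_re]; linarith)
      (by simpa using ha)).norm
    ?_).2.differentiableAt.differentiableWithinAt
  · filter_upwards [self_mem_ae_restrict measurableSet_Ioi] with t (ht : 0 < t) z hz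
    rw [norm_neg, norm_cpow_mul_exp_neg_mul ht, norm_cpow_mul_exp_neg_mul ht]
    gcongr _ * Real.exp (-(?_ * _))
    simpa using (hball z hz).le
  · filter_upwards [self_mem_ae_restrict measurableSet_Ioi] with t ht z _
    have ht' : (t : ℂ) ≠ 0 := ofReal_ne_zero.mpr ht.ne'
    refine ((((hasDerivAt_id z).mul_const (t : ℂ)).neg.cexp).const_mul ((t : ℂ) ^ c)).congr_deriv ?_
    rw [cpow_add _ _ ht', cpow_one]
    simp only [id, one_mul, Pi.neg_apply]
    ring

lemma integral_cpow_mul_exp_neg_mul_Ioi_of_re_pos {s a : ℂ} (hs : 0 < s.re) (ha : 0 < a.re) :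
    ∫ t in Ioi (0 : ℝ), (t : ℂ) ^ (s - 1) * cexp (-(a * t)) = Gamma s / a ^ s := by
  have hU : IsOpen {z : ℂ | 0 < z.re} := isOpen_lt continuous_const continuous_re
  have hlhs := differentiableOn_integral_cpow_mul_exp_neg_mul_Ioi (c := s - 1) (by simpa using hs)
  have hrhs : DifferentiableOn ℂ (fun z : ℂ => Gamma s / z ^ s) {z | 0 < z.re} :=
    fun z (hz : 0 < z.re) => by
      have hz0 : z ≠ 0 := by rintro rfl; simp at hz
      exact ((differentiableAt_const _).div (differentiableAt_id.cpow_const (Or.inl hz))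
        (by simp [cpow_eq_zero_iff, hz0])).differentiableWithinAt
  -- both sides agree for real `a`, which accumulate at `1`
  have hreal : ∀ᶠ x : ℝ in 𝓝[≠] 1, ∫ t in Ioi (0 : ℝ), (t : ℂ) ^ (s - 1) * cexp (-(x * t))
      = Gamma s / (x : ℂ) ^ s :=
    eventually_nhdsWithin_of_eventually_nhds ((lt_mem_nhds one_pos).mono fun x hx => by
      rw [integral_cpow_mul_exp_neg_mul_Ioi hs hx, one_div,
        inv_cpow _ _ (by simp [arg_ofReal_of_nonneg hx.le, Real.pi_ne_zero.symm]), inv_mul_eq_div])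
  have hofReal : Tendsto ((↑) : ℝ → ℂ) (𝓝[≠] 1) (𝓝[≠] 1) :=
    continuous_ofReal.continuousWithinAt.tendsto_nhdsWithin fun _ _ => by simp_all
  exact (hlhs.analyticOnNhd hU).eqOn_of_preconnected_of_frequently_eq (hrhs.analyticOnNhd hU)
    (convex_halfSpace_re_gt 0).isPreconnected (by simp) (hofReal.frequently hreal.frequently) ha

lemma integral_cpow_mul_exp_neg_mul_sq_Ioi {s a : ℂ} (hs : 0 < s.re) (ha : 0 < a.re) :
    ∫ k in Ioi (0 : ℝ), (k : ℂ) ^ (2 * s - 1) * cexp (-a * k ^ 2) = Gamma s / (2 * a ^ s) := by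
  rw [div_mul_eq_div_div_swap, ← integral_cpow_mul_exp_neg_mul_Ioi_of_re_pos hs ha,
    ← integral_comp_rpow_Ioi_of_pos (g := fun t : ℝ => (t : ℂ) ^ (s - 1) * cexp (-(a * t)))
      two_pos, ← integral_div]
  refine setIntegral_congr_fun measurableSet_Ioi fun k (hk : 0 < k) => ?_
  have hk' : (k : ℂ) ≠ 0 := ofReal_ne_zero.mpr hk.ne'
  have hsq : (k : ℂ) ^ (2 * s - 1) = (k : ℂ) * ((k : ℂ) ^ 2) ^ (s - 1) := by
    rw [show 2 * s - 1 = (2 : ℕ) * (s - 1) + 1 by push_cast; ring, cpow_add _ _ hk', cpow_one,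
      cpow_nat_mul' (by simp [arg_ofReal_of_nonneg hk.le, Real.pi_pos])
        (by simp [arg_ofReal_of_nonneg hk.le, Real.pi_pos.le]), mul_comm]
  rw [hsq, Real.rpow_two, show (2 : ℝ) - 1 = 1 by norm_num, Real.rpow_one, real_smul]
  push_cast
  rw [neg_mul]
  ring

lemma norm_cpow_mul_exp_neg_mul_sq {k : ℝ} (hk : 0 < k) (c a : ℂ) :
    ‖(k : ℂ) ^ c * cexp (-a * k ^ 2)‖ = k ^ c.re * Real.exp (-a.re * k ^ 2) := by
  simp [norm_cpow_eq_rpow_re_of_pos hk, Complex.norm_exp, ← ofReal_pow]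

lemma integrableOn_cpow_mul_exp_neg_mul_sq_Ioi {s a : ℂ} (hs : 0 < s.re) (ha : 0 < a.re) :
    IntegrableOn (fun k : ℝ => (k : ℂ) ^ (2 * s - 1) * cexp (-a * k ^ 2)) (Ioi 0) := by
  have hre : (2 * s - 1).re = 2 * s.re - 1 := by simp
  refine (integrableOn_rpow_mul_exp_neg_mul_sq ha (s := (2 * s - 1).re) (by linarith)).mono'
    (by fun_prop : Measurable _).aestronglyMeasurable ?_
  filter_upwards [self_mem_ae_restrict measurableSet_Ioi] with k hk
  rw [norm_cpow_mul_exp_neg_mul_sq hk]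

lemma integral_norm_cpow_mul_exp_neg_mul_sq_Ioi {s a : ℂ} (hs : 0 < s.re) (ha : 0 < a.re) :
    ∫ k in Ioi (0 : ℝ), ‖(k : ℂ) ^ (2 * s - 1) * cexp (-a * k ^ 2)‖
      = a.re ^ (-s.re) * Real.Gamma s.re / 2 := by
  rw [setIntegral_congr_fun measurableSet_Ioi fun k (hk : 0 < k) =>
    norm_cpow_mul_exp_neg_mul_sq hk _ _]
  have hre : (2 * s - 1).re = 2 * s.re - 1 := by simp
  have := integral_rpow_mul_exp_neg_mul_rpow two_pos (q := 2 * s.re - 1) (by linarith) ha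
  simp only [Real.rpow_two] at this
  rw [hre, this]
  ring_nf

lemma Complex.ofReal_mul_cpow {r : ℝ} (hr : 0 ≤ r) (x s : ℂ) :
    ((r : ℂ) * x) ^ s = (r : ℂ) ^ s * x ^ s := by
  rcases hr.eq_or_lt with rfl | hr
  · rcases eq_or_ne s 0 with rfl | hs <;> simp [zero_cpow, *]
  rcases eq_or_ne x 0 with rfl | hx
  · rcases eq_or_ne s 0 with rfl | hs <;> simp [zero_cpow, *]
  have hr' : (r : ℂ) ≠ 0 := ofReal_ne_zero.mpr hr.ne'
  rw [cpow_def_of_ne_zero (mul_ne_zero hr' hx), log_ofReal_mul hr hx, ofReal_log hr.le, add_mul,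
    exp_add, ← cpow_def_of_ne_zero hr', ← cpow_def_of_ne_zero hx]

noncomputable def besselCoeff (ν : ℝ) (m : ℕ) : ℝ :=
  (-1) ^ m / (m.factorial * Real.Gamma (m + ν + 1))

lemma besselJ_eq_tsum (ν x : ℝ) :
    besselJ ν x = ∑' m : ℕ, besselCoeff ν m * (x / 2) ^ (2 * (m : ℝ) + ν) := rfl

lemma besselCoeff_mul_rpow_mul_Gamma {ν : ℝ} (hν : -1 < ν) {x : ℝ} (hx : 0 < x) (m : ℕ) :
    besselCoeff ν m * x ^ (2 * (m : ℝ) + ν) * Real.Gamma (m + ν + 1)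
      = x ^ ν * (-x ^ 2) ^ m / m.factorial := by
  have hΓ : Real.Gamma (m + ν + 1) ≠ 0 :=
    (Real.Gamma_pos_of_pos (by linarith [m.cast_nonneg (α := ℝ)])).ne'
  rw [besselCoeff, Real.rpow_add hx, show (2 : ℝ) * m = ((2 * m : ℕ) : ℝ) by push_cast; ring,
    Real.rpow_natCast, pow_mul, neg_pow (x ^ 2)]
  field_simp

lemma rpow_mul_besselJ_mul {ν r k : ℝ} (hr : 0 ≤ r) (hk : 0 < k) :
    k ^ (ν + 1) * besselJ ν (r * k) = ∑' m : ℕ,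
      besselCoeff ν m * (r / 2) ^ (2 * (m : ℝ) + ν) * k ^ (2 * ((m : ℝ) + ν + 1) - 1) := by
  rw [besselJ_eq_tsum, ← tsum_mul_left]
  refine tsum_congr fun m => ?_
  rw [mul_div_right_comm, Real.mul_rpow (by positivity) hk.le,
    show 2 * ((m : ℝ) + ν + 1) - 1 = 2 * m + ν + (ν + 1) by ring,
    Real.rpow_add hk (2 * m + ν) (ν + 1)]
  ring

noncomputable def besselGaussianTerm (ν r : ℝ) (a : ℂ) (m : ℕ) (k : ℝ) : ℂ :=
  (besselCoeff ν m * (r / 2) ^ (2 * (m : ℝ) + ν) : ℝ) *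
    ((k : ℂ) ^ (2 * ((m + ν + 1 : ℝ) : ℂ) - 1) * cexp (-a * k ^ 2))

lemma cpow_mul_besselJ_mul_exp_eq_tsum {ν r k : ℝ} (hr : 0 ≤ r) (hk : 0 < k) (a : ℂ) :
    (k : ℂ) ^ (ν + 1 : ℂ) * (besselJ ν (r * k) : ℂ) * cexp (-a * k ^ 2)
      = ∑' m : ℕ, besselGaussianTerm ν r a m k := by
  have hpow (m : ℕ) : (k : ℂ) ^ (2 * ((m + ν + 1 : ℝ) : ℂ) - 1)
      = ((k ^ (2 * ((m : ℝ) + ν + 1) - 1) : ℝ) : ℂ) := by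
    rw [ofReal_cpow hk.le]
    push_cast
    ring_nf
  simp_rw [besselGaussianTerm, hpow, ← mul_assoc, ← ofReal_mul]
  rw [tsum_mul_right, ← ofReal_tsum, ← rpow_mul_besselJ_mul hr hk, ofReal_mul, ofReal_cpow hk.le]
  push_cast
  ring

lemma integrableOn_besselGaussianTerm {ν : ℝ} (hν : -1 < ν) (r : ℝ) {a : ℂ} (ha : 0 < a.re)
    (m : ℕ) : IntegrableOn (besselGaussianTerm ν r a m) (Ioi 0) :=
  (integrableOn_cpow_mul_exp_neg_mul_sq_Ioi
    (by rw [ofReal_re]; linarith [m.cast_nonneg (α := ℝ)]) ha).const_mul _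

lemma integral_norm_besselGaussianTerm {ν : ℝ} (hν : -1 < ν) {r : ℝ} (hr : 0 < r) {a : ℂ}
    (ha : 0 < a.re) (m : ℕ) :
    ∫ k in Ioi (0 : ℝ), ‖besselGaussianTerm ν r a m k‖
      = (r / 2) ^ ν / (2 * a.re ^ (ν + 1)) * (((r / 2) ^ 2 / a.re) ^ m / m.factorial) := by
  have hs : 0 < ((m + ν + 1 : ℝ) : ℂ).re := by rw [ofReal_re]; linarith [m.cast_nonneg (α := ℝ)]
  have hΓ : 0 < Real.Gamma (m + ν + 1) := by simpa using Real.Gamma_pos_of_pos hs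
  have hβ : |besselCoeff ν m * (r / 2) ^ (2 * (m : ℝ) + ν)| * Real.Gamma (m + ν + 1)
      = (r / 2) ^ ν * ((r / 2) ^ 2) ^ m / m.factorial := by
    rw [← abs_of_pos hΓ, ← abs_mul, besselCoeff_mul_rpow_mul_Gamma hν (half_pos hr) m, abs_div,
      abs_mul, abs_pow, abs_neg, Nat.abs_cast, abs_of_pos (by positivity : 0 < (r / 2) ^ ν),
      abs_of_nonneg (sq_nonneg _)]
  have hpow : a.re ^ ((m : ℝ) + ν + 1) = a.re ^ (ν + 1) * a.re ^ m := by
    rw [show (m : ℝ) + ν + 1 = ν + 1 + m by ring, Real.rpow_add ha, Real.rpow_natCast]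
  simp_rw [besselGaussianTerm, norm_mul _ (_ * _)]
  rw [integral_const_mul, integral_norm_cpow_mul_exp_neg_mul_sq_Ioi hs ha, norm_real,
    Real.norm_eq_abs, ofReal_re, Real.rpow_neg ha.le, hpow]
  calc _ = |besselCoeff ν m * (r / 2) ^ (2 * (m : ℝ) + ν)| * Real.Gamma (m + ν + 1)
        / (2 * (a.re ^ (ν + 1) * a.re ^ m)) := by ring
    _ = _ := by rw [hβ, div_pow ((r / 2) ^ 2) a.re m]; field_simp

lemma integral_besselGaussianTerm {ν : ℝ} (hν : -1 < ν) {r : ℝ} (hr : 0 < r) {a : ℂ}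
    (ha : 0 < a.re) (m : ℕ) :
    ∫ k in Ioi (0 : ℝ), besselGaussianTerm ν r a m k
      = (r : ℂ) ^ (ν : ℂ) / (2 * a) ^ (ν + 1 : ℂ) *
          ((-(r : ℂ) ^ 2 / (4 * a)) ^ m / m.factorial) := by
  have ha0 : a ≠ 0 := by rintro rfl; simp at ha
  have hs : 0 < ((m + ν + 1 : ℝ) : ℂ).re := by rw [ofReal_re]; linarith [m.cast_nonneg (α := ℝ)]
  have hβ : ((besselCoeff ν m * (r / 2) ^ (2 * (m : ℝ) + ν) : ℝ) : ℂ) * Real.Gamma (m + ν + 1)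
      = (r : ℂ) ^ (ν : ℂ) / 2 ^ (ν : ℂ) * (-(r : ℂ) ^ 2 / 4) ^ m / m.factorial := by
    rw [← ofReal_mul, besselCoeff_mul_rpow_mul_Gamma hν (half_pos hr) m,
      Real.div_rpow hr.le zero_le_two]
    push_cast [ofReal_cpow hr.le, ofReal_cpow zero_le_two]
    ring
  have haν : a ^ (ν + 1 : ℂ) ≠ 0 := by simp [cpow_eq_zero_iff, ha0]
  have h2ν : (2 : ℂ) ^ (ν : ℂ) ≠ 0 := by simp [cpow_eq_zero_iff]
  have h2a : (2 * a) ^ (ν + 1 : ℂ) = 2 ^ (ν : ℂ) * 2 * a ^ (ν + 1 : ℂ) := by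
    rw [← ofReal_ofNat, ofReal_mul_cpow zero_le_two, cpow_add _ _ (by norm_num), cpow_one]
  simp_rw [besselGaussianTerm]
  rw [integral_const_mul, integral_cpow_mul_exp_neg_mul_sq_Ioi hs ha, Gamma_ofReal,
    show ((m + ν + 1 : ℝ) : ℂ) = (ν + 1 : ℂ) + m by push_cast; ring, cpow_add _ _ ha0,
    cpow_natCast, h2a]
  calc _ = ((besselCoeff ν m * (r / 2) ^ (2 * (m : ℝ) + ν) : ℝ) : ℂ) * Real.Gamma (m + ν + 1)
        / (2 * (a ^ (ν + 1 : ℂ) * a ^ m)) := by ring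
    _ = _ := by
      rw [hβ, div_pow _ (4 * a), mul_pow 4 a m, div_pow _ 4]
      field_simp

theorem hankel_gaussian_integral (a : ℂ) (ha : 0 < a.re) (ν : ℝ) (hν : -1 < ν)
    (r : ℝ) (hr : 0 < r) :
    ∫ k in Set.Ioi (0 : ℝ),
        (k : ℂ) ^ (ν + 1 : ℂ) * (besselJ ν (r * k) : ℂ) * Complex.exp (-a * k ^ 2)
      = (r : ℂ) ^ (ν : ℂ) / (2 * a) ^ (ν + 1 : ℂ) *
          Complex.exp (-(r : ℂ) ^ 2 / (4 * a)) := by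
  have hsum := hasSum_integral_of_summable_integral_norm (μ := volume.restrict (Ioi 0))
    (integrableOn_besselGaussianTerm hν r ha) (by
      simp_rw [integral_norm_besselGaussianTerm hν hr ha]
      exact (Real.summable_pow_div_factorial _).mul_left _)
  rw [setIntegral_congr_fun measurableSet_Ioi fun k hk =>
    cpow_mul_besselJ_mul_exp_eq_tsum hr.le hk a, ← hsum.tsum_eq]
  simp_rw [integral_besselGaussianTerm hν hr ha]
  rw [exp_eq_exp_ℂ]
  exact ((NormedSpace.expSeries_div_hasSum_exp (-(r : ℂ) ^ 2 / (4 * a))).mul_left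
    ((r : ℂ) ^ (ν : ℂ) / (2 * a) ^ (ν + 1 : ℂ))).tsum_eq
end

section
/- Let d ≥ 1 and let C : [0,∞) → ℝ be a function such that for every n and every set of points in ℝ^d, the matrix [C(‖xᵢ−xⱼ‖)] is positive semidefinite (i.e., C(‖·‖) is an isotropic covariance kernel on ℝ^d). Then C(u) ≥ −C(0)/d for all u ≥ 0. -/
/-!
The vectors `eᵢ - e₀` built from the standard basis of `ℝ^(d+1)` lie in the hyperplane orthogonal
to `(1, …, 1)`, which is isometric to `ℝ^d`; rescaled, they are `d + 1` points of `ℝ^d` at mutual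
distance `u`. Their covariance matrix has `C 0` on the diagonal and `C u` off it, and testing it
against the all-ones vector gives `(d + 1) * (C 0 + d * C u) ≥ 0`.
-/

open Module Real

theorem Orthonormal.norm_sub_eq_sqrt_two {ι E : Type*} [NormedAddCommGroup E]
    [InnerProductSpace ℝ E] {v : ι → E} (hv : Orthonormal ℝ v) {i j : ι} (hij : i ≠ j) :
    ‖v i - v j‖ = √2 := by
  rw [← sqrt_sq (norm_nonneg _), norm_sub_sq_real, hv.1 i, hv.1 j, hv.inner_eq_zero hij]
  norm_num

theorem exists_pairwise_norm_sub_eq (d : ℕ) {u : ℝ} (hu : 0 ≤ u) :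
    ∃ x : Fin (d + 1) → EuclideanSpace ℝ (Fin d), Pairwise fun i j => ‖x i - x j‖ = u := by
  let e : Fin (d + 1) → EuclideanSpace ℝ (Fin (d + 1)) := fun i => EuclideanSpace.single i 1
  let V := (ℝ ∙ WithLp.toLp 2 (fun _ => 1 : Fin (d + 1) → ℝ))ᗮ
  have hV : finrank ℝ V = d := by
    have : Fact (finrank ℝ (EuclideanSpace ℝ (Fin (d + 1))) = d + 1) := ⟨by simp⟩
    refine Submodule.finrank_orthogonal_span_singleton fun h => ?_
    simpa using congrArg (· 0) h
  have he_mem : ∀ i, e i - e 0 ∈ V := fun i => by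
    simp [V, e, Submodule.mem_orthogonal_singleton_iff_inner_right, inner_sub_right,
      EuclideanSpace.inner_single_right]
  let φ : V ≃ₗᵢ[ℝ] EuclideanSpace ℝ (Fin d) :=
    ((stdOrthonormalBasis ℝ V).reindex (finCongr hV)).repr
  refine ⟨fun i => (u / √2) • φ ⟨e i - e 0, he_mem i⟩, fun i j hij => ?_⟩
  have he_norm : ‖e i - e j‖ = √2 := EuclideanSpace.orthonormal_single.norm_sub_eq_sqrt_two hij
  simp only [← smul_sub, ← map_sub, norm_smul, LinearIsometryEquiv.norm_map]
  rw [Submodule.coe_norm, Submodule.coe_sub, sub_sub_sub_cancel_right, he_norm,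
    norm_of_nonneg (by positivity), div_mul_cancel₀ _ (by positivity)]

theorem Matrix.PosSemidef.sum_entries_nonneg {n R : Type*} [Fintype n] [CommRing R]
    [PartialOrder R] [StarRing R] {A : Matrix n n R} (hA : A.PosSemidef) :
    0 ≤ ∑ i, ∑ j, A i j := by
  simpa [dotProduct, mulVec] using hA.dotProduct_mulVec_nonneg 1

theorem Matrix.PosSemidef.add_mul_nonneg_of_eq_ite {m : ℕ}
    {A : Matrix (Fin (m + 1)) (Fin (m + 1)) ℝ} (hA : A.PosSemidef) {a b : ℝ}
    (hAab : ∀ i j, A i j = if i = j then a else b) :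
    0 ≤ a + m * b := by
  have hsum : ∑ i, ∑ j, A i j = (m + 1) * (a + m * b) := by
    simp only [hAab, Finset.sum_ite, Finset.filter_eq, Finset.mem_univ, ↓reduceIte,
      Finset.sum_const, Finset.card_singleton, one_smul, Finset.filter_ne,
      Finset.card_erase_of_mem, Finset.card_univ, Fintype.card_fin, add_tsub_cancel_right,
      nsmul_eq_mul, smul_add, Nat.cast_add, Nat.cast_one]
    ring
  exact nonneg_of_mul_nonneg_right (hsum ▸ hA.sum_entries_nonneg) (by positivity)

theorem isotropic_covariance_lower_bound (d : ℕ) (hd : 1 ≤ d) (C : ℝ → ℝ)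
    (hpsd : ∀ (n : ℕ) (x : Fin n → EuclideanSpace ℝ (Fin d)),
      Matrix.PosSemidef (Matrix.of fun i j => C ‖x i - x j‖)) :
    ∀ u : ℝ, 0 ≤ u → C u ≥ -C 0 / d := by
  intro u hu
  obtain ⟨x, hx⟩ := exists_pairwise_norm_sub_eq d hu
  have hCx : ∀ i j, C ‖x i - x j‖ = if i = j then C 0 else C u := fun i j => by
    rcases eq_or_ne i j with rfl | hij
    · simp
    · simp [hij, hx hij]
  have hsimplex := (hpsd (d + 1) x).add_mul_nonneg_of_eq_ite hCx
  have hd_pos : (0 : ℝ) < d := by exact_mod_cast hd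
  rw [ge_iff_le, div_le_iff₀ hd_pos]
  linarith
end
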